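/- One unit cell of MBQC implements the CQCA deterministically (the case of all-|+⟩ measurement outcomes): for every N-qubit unitary T and every vector |ψ⟩ ∈ (ℂ²)^{⊗N}, (√2)^N · (⟨+|^{⊗N} ⊗ 1) · U_T · (|ψ⟩ ⊗ |+⟩^{⊗N}) = T |ψ⟩, where ⟨+|^{⊗N} ⊗ 1 : (ℂ²)^{⊗N} ⊗ (ℂ²)^{⊗N} → (ℂ²)^{⊗N} denotes the linear map contracting the input register with the product bra ⟨+|^{⊗N}. -/

import Mathlib

open Matrix Complex
open scoped Kronecker Classical

noncomputable section

namespace QCA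

/-- Computational-basis index set of an `N`-qubit register. -/
abbrev QIdx (N : ℕ) := Fin N → Fin 2

/-- Operators (matrices) on an `N`-qubit register `(ℂ²)^{⊗N}`. -/
abbrev MatQ (N : ℕ) := Matrix (QIdx N) (QIdx N) ℂ

/-- Pauli X. -/
def Xg : Matrix (Fin 2) (Fin 2) ℂ := !![0, 1; 1, 0]

/-- Pauli Z. -/
def Zg : Matrix (Fin 2) (Fin 2) ℂ := !![1, 0; 0, -1]

/-- Pauli Y = i·X·Z. -/
def Yg : Matrix (Fin 2) (Fin 2) ℂ := Complex.I • (Xg * Zg)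

/-- Hadamard gate. -/
def Hg : Matrix (Fin 2) (Fin 2) ℂ := (Real.sqrt 2 : ℂ)⁻¹ • !![1, 1; 1, -1]

/-- Phase gate S = diag(1, i). -/
def Sg : Matrix (Fin 2) (Fin 2) ℂ := !![1, 0; 0, Complex.I]

/-- √X := H·S·H. -/
def sqrtXg : Matrix (Fin 2) (Fin 2) ℂ := Hg * Sg * Hg

/-- The ket |+⟩ = (|0⟩+|1⟩)/√2. -/
def ketPlus : Fin 2 → ℂ := fun _ => (Real.sqrt 2 : ℂ)⁻¹

/-- The bra ⟨+|. -/
def braPlus : Fin 2 → ℂ := fun a => star (ketPlus a)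

/-- The product state |+⟩^{⊗ι}. -/
def ketPlusAll (ι : Type*) [Fintype ι] : (ι → Fin 2) → ℂ := fun s => ∏ i, ketPlus (s i)

/-- Kronecker product of two vectors. -/
def kronVec {a b : Type*} (v : a → ℂ) (w : b → ℂ) : a × b → ℂ := fun p => v p.1 * w p.2

variable {ι : Type*} [Fintype ι] [DecidableEq ι]

/-- `op1 P i` acts as the one-qubit operator `P` on qubit `i` and as the identity elsewhere. -/
def op1 (P : Matrix (Fin 2) (Fin 2) ℂ) (i : ι) : Matrix (ι → Fin 2) (ι → Fin 2) ℂ :=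
  fun s t => P (s i) (t i) * ∏ j ∈ Finset.univ.erase i, (if s j = t j then (1 : ℂ) else 0)

/-- Controlled-Z gate between qubits `i` and `j` (identity elsewhere). -/
def cz2 (i j : ι) : Matrix (ι → Fin 2) (ι → Fin 2) ℂ :=
  Matrix.diagonal fun s => if s i = 1 ∧ s j = 1 then (-1 : ℂ) else 1

/-- The Z-rotation exp(iθ Z_i) on qubit `i`. -/
def rotZ (θ : ℝ) (i : ι) : Matrix (ι → Fin 2) (ι → Fin 2) ℂ :=
  NormedSpace.exp (((θ : ℂ) * Complex.I) • op1 Zg i)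

/-- The layer ∏_{i=1}^{N} H_i of Hadamards on every site of a ring of `N` qubits. -/
def hadamardLayer (N : ℕ) : MatQ N := (List.ofFn fun i : Fin N => op1 Hg i).prod

/-- The layer ∏_{i=1}^{N} CZ_{i,i+1} of controlled-Z gates on a ring of `N` qubits
(site indices mod `N`; the factors pairwise commute). -/
def czRing (N : ℕ) [NeZero N] : MatQ N := (List.ofFn fun i : Fin N => cz2 i (i + 1)).prod

/-- The layer ∏_{i=1}^{N} (√X)_i on a ring of `N` qubits. -/
def sqrtXLayer (N : ℕ) : MatQ N := (List.ofFn fun i : Fin N => op1 sqrtXg i).prod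

/-- The cluster CQCA T_c = (∏ H_i)·(∏ CZ_{i,i+1}) on a ring of `N` qubits. -/
def Tc (N : ℕ) [NeZero N] : MatQ N := hadamardLayer N * czRing N

/-- The periodic CQCA T̃_c = ∏ CZ_{i,i+1} on a ring of `N` qubits. -/
def Ttc (N : ℕ) [NeZero N] : MatQ N := czRing N

/-- The fractal CQCA T̂_c = (∏ H_i)·(∏ CZ_{i,i+1})·(∏ (√X)_i) on a ring of `N` qubits. -/
def Thc (N : ℕ) [NeZero N] : MatQ N := hadamardLayer N * czRing N * sqrtXLayer N

/-- Controlled-Z between input qubit `i` and output qubit `i` on a doubled register. -/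
def czIO {N : ℕ} (i : Fin N) : Matrix (QIdx N × QIdx N) (QIdx N × QIdx N) ℂ :=
  Matrix.diagonal fun p => if p.1 i = 1 ∧ p.2 i = 1 then (-1 : ℂ) else 1

/-- The unitary U_T = (1 ⊗ T)·(∏_i H_i^{(out)})·(∏_i CZ_{i,i}^{(in,out)}) of Eq. (16). -/
def UT {N : ℕ} (T : MatQ N) : Matrix (QIdx N × QIdx N) (QIdx N × QIdx N) ℂ :=
  ((1 : MatQ N) ⊗ₖ T) *
    (List.ofFn fun i : Fin N => (1 : MatQ N) ⊗ₖ op1 Hg i).prod *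
    (List.ofFn fun i : Fin N => czIO i).prod

/-- Contraction of the input register with the product bra `⊗_i bra i`. -/
def contractIn {N : ℕ} (bra : Fin N → Fin 2 → ℂ) (v : QIdx N × QIdx N → ℂ) : QIdx N → ℂ :=
  fun t => ∑ s : QIdx N, (∏ i, bra i (s i)) * v (s, t)

lemma diagonal_commute {α : Type*} [Fintype α] [DecidableEq α] (d e : α → ℂ) :
    Commute (Matrix.diagonal d) (Matrix.diagonal e) := by
  unfold Commute SemiconjBy
  have h : (fun i => d i * e i) = fun i => e i * d i := by funext x; ring
  rw [Matrix.diagonal_mul_diagonal, Matrix.diagonal_mul_diagonal, h]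

lemma Zg_eq_diagonal : Zg = Matrix.diagonal ![1, -1] := by
  ext i j
  fin_cases i <;> fin_cases j <;> simp [Zg, Matrix.diagonal]

lemma op1_diagonal (d : Fin 2 → ℂ) (i : ι) :
    op1 (Matrix.diagonal d) i = Matrix.diagonal (fun s => d (s i)) := by
  ext s t
  by_cases h : s = t
  · subst h
    simp [op1, Matrix.diagonal_apply_eq]
  · rw [Matrix.diagonal_apply_ne _ h]
    by_cases hi : s i = t i
    · obtain ⟨k, hk⟩ : ∃ k, s k ≠ t k := Function.ne_iff.mp h
      have hki : k ≠ i := by rintro rfl; exact hk hi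
      have h0 : (if s k = t k then (1 : ℂ) else 0) = 0 := by simp [hk]
      unfold op1
      rw [Finset.prod_eq_zero (Finset.mem_erase.mpr ⟨hki, Finset.mem_univ k⟩) h0]
      ring
    · unfold op1
      rw [Matrix.diagonal_apply_ne _ hi]
      ring

/-- The controlled-Z gate attached to an (undirected) edge `e`. -/
def czEdge {N : ℕ} (e : Sym2 (Fin N)) : MatQ N :=
  Matrix.diagonal fun s => if ∀ i ∈ e, s i = 1 then (-1 : ℂ) else 1

/-- The unitary ∏_{{i,j} ∈ E(G)} CZ_{i,j} preparing the graph state (the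
factors pairwise commute, so the product over the edge set is well defined). -/
def graphUnitary {N : ℕ} (G : SimpleGraph (Fin N)) [DecidableRel G.Adj] : MatQ N :=
  G.edgeFinset.noncommProd czEdge (by intro a _ b _ _; exact diagonal_commute _ _)

/-- The graph state |G⟩ = (∏_{{i,j} ∈ E(G)} CZ_{i,j}) |+⟩^{⊗N}. -/
def graphState {N : ℕ} (G : SimpleGraph (Fin N)) [DecidableRel G.Adj] : QIdx N → ℂ :=
  (graphUnitary G).mulVec (ketPlusAll (Fin N))

/-- The stabilizer generator K_v = X_v · ∏_{w ∈ N_G(v)} Z_w of the graph state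
(the Z factors pairwise commute, so the product is well defined). -/
def stabGen {N : ℕ} (G : SimpleGraph (Fin N)) [DecidableRel G.Adj] (v : Fin N) : MatQ N :=
  op1 Xg v *
    (G.neighborFinset v).noncommProd (fun w => op1 Zg w)
      (by
        intro a _ b _ _
        simp only [Function.onFun]
        rw [Zg_eq_diagonal, op1_diagonal, op1_diagonal]
        exact diagonal_commute _ _)

/-!
Identify a state `u` of the doubled register with the matrix `X` (rows indexed by the output,
columns by the input) such that `u = vec X`; then `1 ⊗ A` acts as `X ↦ A * X`. Since
`H a b = (-1)^{ab} / √2` and `|+⟩^{⊗N}` is the constant vector `2^{-N/2}`, the CZ layer maps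
`ψ ⊗ |+⟩^{⊗N}` to `vec (H^{⊗N} · diag ψ)`. The Hadamards on the output cancel `H^{⊗N}`, `T` turns
the state into `vec (T · diag ψ)`, and contracting the input with the constant bra
`⟨+|^{⊗N} = 2^{-N/2} ∑_s ⟨s|` leaves `2^{-N/2} T ψ`.
-/

section PiKron

variable {n σ R : Type*} [Fintype n] [CommSemiring R]

def piKron (g : n → Matrix σ σ R) : Matrix (n → σ) (n → σ) R :=
  Matrix.of fun s t => ∏ i, g i (s i) (t i)

@[simp]
lemma piKron_apply (g : n → Matrix σ σ R) (s t : n → σ) :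
    piKron g s t = ∏ i, g i (s i) (t i) := rfl

lemma piKron_one [DecidableEq σ] : piKron (1 : n → Matrix σ σ R) = 1 := by
  ext s t
  simp only [piKron_apply, Pi.one_apply, one_apply, Finset.prod_boole, Finset.mem_univ,
    forall_const, funext_iff]

variable [DecidableEq n] [Fintype σ]

lemma piKron_mul (g h : n → Matrix σ σ R) : piKron g * piKron h = piKron (g * h) := by
  ext s t
  simp only [mul_apply, piKron_apply, Pi.mul_apply, Fintype.prod_sum, Finset.prod_mul_distrib]

def piKronHom [DecidableEq σ] : (n → Matrix σ σ R) →* Matrix (n → σ) (n → σ) R where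
  toFun := piKron
  map_one' := piKron_one
  map_mul' g h := (piKron_mul g h).symm

end PiKron

lemma list_prod_ofFn_mulSingle {M : Type*} [Monoid M] :
    ∀ {k : ℕ} (j : Fin k) (x : M), (List.ofFn (Pi.mulSingle j x)).prod = x
  | 0, j, _ => j.elim0
  | k + 1, j, x => by
    induction j using Fin.cases with
    | zero => simp [List.ofFn_succ, Fin.succ_ne_zero]
    | succ j =>
      have htail :
          (fun i : Fin k => (Pi.mulSingle j.succ x : Fin (k + 1) → M) i.succ) = Pi.mulSingle j x := by
        funext i
        simp [Pi.mulSingle_apply]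
      rw [List.ofFn_succ, List.prod_cons, Pi.mulSingle_eq_of_ne (Fin.succ_ne_zero j).symm,
        one_mul, htail, list_prod_ofFn_mulSingle j x]

lemma list_prod_map_one_kronecker {l m R : Type*} [Fintype l] [Fintype m] [DecidableEq l]
    [DecidableEq m] [CommSemiring R] (L : List (Matrix m m R)) :
    (L.map fun A => (1 : Matrix l l R) ⊗ₖ A).prod = 1 ⊗ₖ L.prod := by
  induction L with
  | nil => exact one_kronecker_one.symm
  | cons A L ih =>
    rw [List.map_cons, List.prod_cons, List.prod_cons, ih, ← mul_kronecker_mul, one_mul]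

lemma op1_eq_piKron (P : Matrix (Fin 2) (Fin 2) ℂ) (i : ι) :
    op1 P i = piKron (Pi.mulSingle i P) := by
  ext s t
  rw [piKron_apply, ← Finset.mul_prod_erase _ _ (Finset.mem_univ i), Pi.mulSingle_eq_same, op1]
  refine congrArg _ (Finset.prod_congr rfl fun j hj => ?_)
  rw [Pi.mulSingle_eq_of_ne (Finset.ne_of_mem_erase hj), one_apply]

lemma hadamardLayer_eq_piKron (N : ℕ) : hadamardLayer N = piKron fun _ => Hg := by
  have hsingles : (List.ofFn fun i : Fin N => Pi.mulSingle i Hg).prod = fun _ => Hg := by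
    funext j
    rw [Pi.list_prod_apply, List.map_ofFn]
    exact (congrArg _ (congrArg _ (funext fun i => Pi.mulSingle_comm i Hg j))).trans
      (list_prod_ofFn_mulSingle j Hg)
  calc hadamardLayer N = piKronHom (List.ofFn fun i : Fin N => Pi.mulSingle i Hg).prod := by
        rw [map_list_prod, List.map_ofFn]
        simp only [hadamardLayer, op1_eq_piKron]
        rfl
    _ = piKron fun _ => Hg := by rw [hsingles]; rfl

def czPhase (a b : Fin 2) : ℂ := if a = 1 ∧ b = 1 then -1 else 1

lemma czPhase_comm (a b : Fin 2) : czPhase a b = czPhase b a := by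
  simp only [czPhase, and_comm]

lemma Hg_apply (a b : Fin 2) : Hg a b = (Real.sqrt 2 : ℂ)⁻¹ * czPhase a b := by
  fin_cases a <;> fin_cases b <;> simp [Hg, czPhase]

lemma Hg_mul_self : Hg * Hg = 1 := by
  ext a b
  fin_cases a <;> fin_cases b <;>
    norm_num [mul_apply, Hg_apply, czPhase, Fin.sum_univ_two, ← sq, ← Complex.ofReal_pow]

lemma hadamardLayer_apply {N : ℕ} (t s : QIdx N) :
    hadamardLayer N t s = ((Real.sqrt 2 : ℂ) ^ N)⁻¹ * ∏ i, czPhase (t i) (s i) := by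
  simp only [hadamardLayer_eq_piKron, piKron_apply, Hg_apply, Finset.prod_mul_distrib,
    Finset.prod_const, Finset.card_univ, Fintype.card_fin, inv_pow]

lemma hadamardLayer_mul_self (N : ℕ) : hadamardLayer N * hadamardLayer N = 1 := by
  rw [hadamardLayer_eq_piKron, piKron_mul]
  exact (congrArg piKron (funext fun _ => Hg_mul_self)).trans piKron_one

lemma list_prod_czIO (N : ℕ) :
    (List.ofFn fun i : Fin N => czIO i).prod
      = diagonal fun p => ∏ i, czPhase (p.1 i) (p.2 i) := by
  calc (List.ofFn fun i : Fin N => czIO i).prod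
      = diagonalRingHom _ ℂ (List.ofFn fun i p => czPhase (p.1 i) (p.2 i)).prod := by
        rw [map_list_prod, List.map_ofFn]; rfl
    _ = _ := by rw [List.prod_ofFn]; simp only [Finset.prod_fn]; rfl

lemma list_prod_czIO_mulVec_kronVec {N : ℕ} (ψ : QIdx N → ℂ) :
    (List.ofFn fun i : Fin N => czIO i).prod *ᵥ kronVec ψ (ketPlusAll (Fin N))
      = vec (hadamardLayer N * diagonal ψ) := by
  ext ⟨s, t⟩
  simp only [list_prod_czIO, mulVec_diagonal, vec, mul_diagonal, hadamardLayer_apply, kronVec,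
    ketPlusAll, ketPlus, Finset.prod_const, Finset.card_univ, Fintype.card_fin, inv_pow,
    czPhase_comm (s _)]
  ring

lemma UT_mulVec_kronVec {N : ℕ} (T : MatQ N) (ψ : QIdx N → ℂ) :
    UT T *ᵥ kronVec ψ (ketPlusAll (Fin N)) = vec (T * diagonal ψ) := by
  have hout : (List.ofFn fun i : Fin N => (1 : MatQ N) ⊗ₖ op1 Hg i).prod
      = 1 ⊗ₖ hadamardLayer N := by
    rw [hadamardLayer, ← list_prod_map_one_kronecker, List.map_ofFn]; rfl
  rw [UT, ← mulVec_mulVec, ← mulVec_mulVec, list_prod_czIO_mulVec_kronVec, hout,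
    ← vec_mul_eq_mulVec, ← Matrix.mul_assoc, hadamardLayer_mul_self, Matrix.one_mul,
    ← vec_mul_eq_mulVec]

lemma contractIn_vec {N : ℕ} (bra : Fin N → Fin 2 → ℂ) (X : MatQ N) :
    contractIn bra (vec X) = X *ᵥ fun s => ∏ i, bra i (s i) := by
  funext t
  simp only [contractIn, vec, mulVec, dotProduct, mul_comm]

theorem mbqc_unit_cell_general {N : ℕ} (T : MatQ N) (ψ : QIdx N → ℂ) :
    ((Real.sqrt 2 : ℂ) ^ N) •
        contractIn (fun _ => braPlus)
          ((UT T).mulVec (kronVec ψ (ketPlusAll (Fin N)))) =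
      T.mulVec ψ := by
  have hbra : (fun s : QIdx N => ∏ i, braPlus (s i)) = ((Real.sqrt 2 : ℂ) ^ N)⁻¹ • 1 := by
    funext s
    simp [braPlus, ketPlus, Complex.conj_ofReal]
  have hsqrt : (Real.sqrt 2 : ℂ) ^ N ≠ 0 := pow_ne_zero _ (by norm_num)
  rw [UT_mulVec_kronVec, contractIn_vec, hbra, ← mulVec_mulVec, mulVec_smul, mulVec_smul,
    smul_smul, mul_inv_cancel₀ hsqrt, one_smul]
  congr 1
  funext s
  rw [mulVec_diagonal, Pi.one_apply, mul_one]

/-- one unit cell of MBQC with all-|+⟩ outcomes implements `T`: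
`(√2)^N (⟨+|^{⊗N} ⊗ 1) U_T (|ψ⟩ ⊗ |+⟩^{⊗N}) = T|ψ⟩`. -/
theorem mbqc_unit_cell {N : ℕ} (T : MatQ N)
    (hT : T ∈ Matrix.unitaryGroup (QIdx N) ℂ) (ψ : QIdx N → ℂ) :
    ((Real.sqrt 2 : ℂ) ^ N) •
        contractIn (fun _ => braPlus)
          ((UT T).mulVec (kronVec ψ (ketPlusAll (Fin N)))) =
      T.mulVec ψ :=
  mbqc_unit_cell_general T ψ

end QCA

end
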